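/- arXiv:2406.17122 — 4 statements merged into one kernel-verified Lean document; each statement's English description precedes it below -/
import Mathlib

section
/- Let $R$ be a Noetherian commutative ring, $J \subseteq R$ an ideal, $S \subseteq R$ a multiplicative set, and $h \in R$ an element such that the contraction of $S^{-1}J$ to $R$ equals the saturation $(J : h^\infty)$. Then every associated prime $P$ of $J$ with $P \cap S \neq \emptyset$ contains $h$. -/
/-!
An associated prime of `R ⧸ J` is the radical of the annihilator of some class `x + J`. If it
contains `s ∈ S`, then `s ^ n * x ∈ J`, so `x` lies in the contraction of `S⁻¹J`, hence in
`(J : h^∞)`; thus `h ^ k * x ∈ J`, i.e. `h` lies in that radical.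
-/

/-- The saturation `(J : h^∞) = {f : R | h^k f ∈ J for some k ≥ 0}` of an ideal `J` by an
element `h`. -/
def satIdeal {R : Type*} [CommRing R] (J : Ideal R) (h : R) : Ideal R where
  carrier := {f | ∃ k : ℕ, h ^ k * f ∈ J}
  zero_mem' := ⟨0, by simp⟩
  add_mem' := by
    rintro a b ⟨k, hk⟩ ⟨l, hl⟩
    refine ⟨k + l, ?_⟩
    have h1 := J.add_mem (J.mul_mem_left (h ^ l) hk) (J.mul_mem_left (h ^ k) hl)
    convert h1 using 1
    ring
  smul_mem' := by
    rintro c a ⟨k, hk⟩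
    refine ⟨k, ?_⟩
    have h1 := J.mul_mem_left c hk
    convert h1 using 1
    simp [smul_eq_mul]
    ring

lemma Ideal.Quotient.mem_radical_colon_mk_iff {R : Type*} [CommRing R] (J : Ideal R)
    (x a : R) :
    a ∈ ((⊥ : Submodule R (R ⧸ J)).colon {Ideal.Quotient.mk J x}).radical ↔
      ∃ n : ℕ, a ^ n * x ∈ J := by
  simp only [Ideal.mem_radical_iff, Submodule.mem_colon_singleton, Submodule.mem_bot,
    Algebra.smul_def, Ideal.Quotient.algebraMap_eq, ← map_mul, Ideal.Quotient.eq_zero_iff_mem]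

lemma IsAssociatedPrime.exists_mem_iff_exists_pow_mul_mem {R : Type*} [CommRing R]
    {J P : Ideal R} (hP : IsAssociatedPrime P (R ⧸ J)) :
    ∃ x : R, ∀ a, a ∈ P ↔ ∃ n : ℕ, a ^ n * x ∈ J := by
  obtain ⟨m, rfl⟩ := hP.eq_radical_colon
  obtain ⟨x, rfl⟩ := Ideal.Quotient.mk_surjective m
  exact ⟨x, Ideal.Quotient.mem_radical_colon_mk_iff J x⟩

theorem mem_associatedPrime_of_meets_of_contraction_eq_saturation_general
    {R : Type*} [CommRing R] (J : Ideal R) (S : Submonoid R) (h : R)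
    (hsat : Ideal.comap (algebraMap R (Localization S))
        (Ideal.map (algebraMap R (Localization S)) J) = satIdeal J h) :
    ∀ P ∈ associatedPrimes R (R ⧸ J), (∃ s ∈ S, s ∈ P) → h ∈ P := by
  rintro P hP ⟨s, hsS, hsP⟩
  obtain ⟨x, hPx⟩ := IsAssociatedPrime.exists_mem_iff_exists_pow_mul_mem hP
  obtain ⟨n, hn⟩ := (hPx s).1 hsP
  have hx : x ∈ satIdeal J h := hsat ▸
    (IsLocalization.algebraMap_mem_map_algebraMap_iff S (Localization S) J x).2
      ⟨s ^ n, pow_mem hsS n, hn⟩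
  obtain ⟨k, hk⟩ := hx
  exact (hPx h).2 ⟨k, hk⟩

/-- Let `R` be a Noetherian commutative ring, `J ⊆ R` an ideal, `S ⊆ R` a
multiplicative set and `h ∈ R` an element such that the contraction of `S⁻¹J` to `R` equals
the saturation `(J : h^∞)`. Then every associated prime `P` of `J` with `P ∩ S ≠ ∅`
contains `h`. -/
theorem mem_associatedPrime_of_meets_of_contraction_eq_saturation
    {R : Type*} [CommRing R] [IsNoetherianRing R] (J : Ideal R) (S : Submonoid R) (h : R)
    (hsat : Ideal.comap (algebraMap R (Localization S))
        (Ideal.map (algebraMap R (Localization S)) J) = satIdeal J h) :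
    ∀ P ∈ associatedPrimes R (R ⧸ J), (∃ s ∈ S, s ∈ P) → h ∈ P :=
  mem_associatedPrime_of_meets_of_contraction_eq_saturation_general J S h hsat
end

section
/- Let $Y \subseteq \mathbb{C}^n$ be an affine algebraic variety with vanishing ideal $I(Y) \subseteq \mathbb{C}[x_1,\dots,x_n]$, let $u$ be a maximally independent subset of variables for $I(Y)$ (so $|u| = \dim Y$ and $\mathbb{C}[u] \to \mathbb{C}[x]/I(Y)$ is injective), and let $h \in \mathbb{C}[u]$ be a nonzero polynomial such that $(I(Y) : h^\infty) = I(Y)\mathbb{C}(u)[x\setminus u] \cap \mathbb{C}[x]$. Then the Zariski closure of $Y \setminus V(h)$ is equidimensional of dimension $\dim(Y)$, i.e., every minimal prime over $(I(Y):h^\infty)$ defines a variety of dimension exactly $\dim(Y)$. -/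
/-!
Let `P` be a minimal prime of `J = I(Y) ℂ(u)[x∖u] ∩ ℂ[x]`. Each element of `P` kills some element
outside `J`, whereas a nonzero element of `ℂ[u]` is a unit in `ℂ(u)[x∖u]` and so kills nothing
outside `J`; hence `P ∩ ℂ[u] = 0`. The variables `u` thus remain algebraically independent in
`ℂ[x]/P`, giving `dim ℂ[x]/P ≥ |u| = dim Y`, while `P ⊇ I(Y)` gives the reverse inequality.

The bound `dim B ≥ n` for a finitely generated domain `B` containing `n` algebraically
independent elements goes by induction: if `t ∈ B` is transcendental over a subalgebra `A`, the
localization of `B` at `A ∖ 0` is not a field (Zariski's lemma would make `t` algebraic), so some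
nonzero prime `Q` of `B` misses `A`, and `B ⧸ Q` still contains the other `n - 1` elements
independently.
-/

open MvPolynomial

open scoped nonZeroDivisors

universe u

section Transcendental

variable {A B : Type u} [CommRing A] [IsDomain A] [CommRing B] [IsDomain B] [Algebra A B]
  [FaithfulSMul A B] [Algebra.FiniteType A B] {t : B}

theorem not_isField_localization_of_transcendental (ht : Transcendental A t) :
    ¬ IsField (Localization (Algebra.algebraMapSubmonoid B A⁰)) := by
  intro hfield
  let B' := Localization (Algebra.algebraMapSubmonoid B A⁰)
  have : IsLocalization (A⁰.map (algebraMap A B)) B' := Localization.isLocalization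
  have : Algebra.FiniteType (Localization A⁰) B' := by
    rw [← RingHom.finiteType_algebraMap]
    exact RingHom.finiteType_localizationPreserves (algebraMap A B) A⁰ _ _
      (RingHom.finiteType_algebraMap.mpr ‹_›)
  let := hfield.toField
  have := finite_of_finite_type_of_isJacobsonRing (Localization A⁰) B'
  have hinj : Function.Injective (algebraMap B B') := IsLocalization.injective B'
    (algebraMapSubmonoid_le_nonZeroDivisors_of_faithfulSMul (A := A) B le_rfl)
  apply ht
  rw [← isAlgebraic_algebraMap_iff hinj, IsFractionRing.isAlgebraic_iff A (Localization A⁰) B']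
  exact (Algebra.IsIntegral.isIntegral _).isAlgebraic

theorem exists_isPrime_ne_bot_comap_eq_bot_of_transcendental (ht : Transcendental A t) :
    ∃ Q : Ideal B, Q.IsPrime ∧ Q ≠ ⊥ ∧ Q.comap (algebraMap A B) = ⊥ := by
  let M := Algebra.algebraMapSubmonoid B A⁰
  have : IsDomain (Localization M) := IsLocalization.isDomain_localization
    (algebraMapSubmonoid_le_nonZeroDivisors_of_faithfulSMul (A := A) B le_rfl)
  obtain ⟨Q', hQ'bot, hQ'⟩ :=
    Ring.not_isField_iff_exists_prime.mp (not_isField_localization_of_transcendental ht)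
  refine ⟨Q'.under B, Ideal.IsPrime.under B Q', fun hbot ↦ ?_, ?_⟩
  · rw [← IsLocalization.map_under M (Localization M) Q', hbot, Ideal.map_bot] at hQ'bot
    exact hQ'bot rfl
  · refine (Submodule.eq_bot_iff _).mpr fun a ha ↦ by_contra fun ha0 ↦ hQ'.ne_top ?_
    have hmem : algebraMap A B a ∈ M := ⟨a, mem_nonZeroDivisors_of_ne_zero ha0, rfl⟩
    exact Ideal.eq_top_of_isUnit_mem _ ha (IsLocalization.map_units _ ⟨_, hmem⟩)

end Transcendental

theorem ringKrullDim_quotient_add_one_le_of_ne_bot {B : Type*} [CommRing B] [IsDomain B]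
    {Q : Ideal B} (hQ : Q ≠ ⊥) : ringKrullDim (B ⧸ Q) + 1 ≤ ringKrullDim B := by
  obtain ⟨q, hqQ, hq0⟩ := Submodule.exists_mem_ne_zero_of_ne_bot hQ
  exact ringKrullDim_succ_le_of_surjective _ Ideal.Quotient.mk_surjective
    (mem_nonZeroDivisors_of_ne_zero hq0) (Ideal.Quotient.eq_zero_iff_mem.mpr hqQ)

theorem AlgebraicIndependent.natCard_le_ringKrullDim {K : Type*} {B : Type u} [Field K]
    [CommRing B] [IsDomain B] [Algebra K B] [Algebra.FiniteType K B] {ι : Type*} [Finite ι]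
    {x : ι → B}
    (hx : AlgebraicIndependent K x) : (Nat.card ι : WithBot ℕ∞) ≤ ringKrullDim B := by
  induction ι using Finite.induction_empty_option generalizing B with
  | of_equiv e ih =>
    rw [← Nat.card_congr e]
    exact ih (hx.comp e e.injective)
  | h_empty => simpa using ringKrullDim_nonneg_of_nontrivial
  | @h_option α _ ih =>
    let A := Algebra.adjoin K (Set.range (x ∘ some))
    have hx_elim : (fun o : Option α ↦ o.elim (x none) (x ∘ some)) = x := by
      funext o; cases o <;> rfl
    have htr : Transcendental A (x none) :=
      (AlgebraicIndependent.option_iff.mp (hx_elim ▸ hx)).2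
    have : Algebra.FiniteType A B := .of_restrictScalars_finiteType K A B
    obtain ⟨Q, hQ, hQbot, hQA⟩ := exists_isPrime_ne_bot_comap_eq_bot_of_transcendental htr
    have hinjOn : Set.InjOn (Ideal.Quotient.mkₐ K Q) A := by
      intro a ha b hb hab
      have hmem : (⟨a - b, sub_mem ha hb⟩ : A) ∈ Q.comap (algebraMap A B) := by
        simpa [Ideal.Quotient.mk_eq_mk_iff_sub_mem] using hab
      rw [hQA, Ideal.mem_bot] at hmem
      exact sub_eq_zero.mp (congrArg Subtype.val hmem)
    have hcard := ih ((hx.comp some (Option.some_injective α)).map hinjOn)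
    calc (Nat.card (Option α) : WithBot ℕ∞) = Nat.card α + 1 := by simp
      _ ≤ ringKrullDim (B ⧸ Q) + 1 := by gcongr
      _ ≤ ringKrullDim B := ringKrullDim_quotient_add_one_le_of_ne_bot hQbot

theorem Ideal.disjoint_of_mem_minimalPrimes_comap_map {R A : Type*} [CommRing R] [CommRing A]
    [Algebra R A] (S : Submonoid R) [IsLocalization S A] {I P : Ideal R}
    (hP : P ∈ ((I.map (algebraMap R A)).comap (algebraMap R A)).minimalPrimes) :
    Disjoint (S : Set R) P := by
  refine Set.disjoint_left.mpr fun s hsS hsP ↦ ?_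
  obtain ⟨y, hy, hsy⟩ := Ideal.exists_mul_mem_of_mem_minimalPrimes hP hsP
  rw [Ideal.mem_comap, map_mul] at hsy
  exact hy ((Ideal.unit_mul_mem_iff_mem _ (IsLocalization.map_units A ⟨s, hsS⟩)).mp hsy)

theorem saturation_equidimensional_general
    {n : ℕ} (Y : Set (Fin n → ℂ))
    (u : Finset (Fin n)) (h : MvPolynomial {i // i ∈ u} ℂ) :
    let ρ : MvPolynomial {i // i ∈ u} ℂ →+* MvPolynomial (Fin n) ℂ :=
      (rename (fun i : {i // i ∈ u} => (i : Fin n)) :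
        MvPolynomial {i // i ∈ u} ℂ →ₐ[ℂ] MvPolynomial (Fin n) ℂ).toRingHom
    let S : Submonoid (MvPolynomial (Fin n) ℂ) :=
      Submonoid.map ρ.toMonoidHom (nonZeroDivisors (MvPolynomial {i // i ∈ u} ℂ))
    -- `u` is a maximally independent subset of variables for `I(Y)`
    (∀ g : MvPolynomial {i // i ∈ u} ℂ, ρ g ∈ vanishingIdeal ℂ Y → g = 0) →
    (u.card : WithBot ℕ∞) = ringKrullDim (MvPolynomial (Fin n) ℂ ⧸ vanishingIdeal ℂ Y) →
    -- the saturation coincides with the extension–contraction along `ℂ[x] → ℂ(u)[x∖u]`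
    satIdeal (vanishingIdeal ℂ Y) (ρ h) =
      Ideal.comap (algebraMap (MvPolynomial (Fin n) ℂ) (Localization S))
        (Ideal.map (algebraMap (MvPolynomial (Fin n) ℂ) (Localization S)) (vanishingIdeal ℂ Y)) →
    ∀ P ∈ (satIdeal (vanishingIdeal ℂ Y) (ρ h)).minimalPrimes,
      ringKrullDim (MvPolynomial (Fin n) ℂ ⧸ P) =
        ringKrullDim (MvPolynomial (Fin n) ℂ ⧸ vanishingIdeal ℂ Y) := by
  intro ρ S _ hcard hsat P hP
  rw [hsat] at hP
  have : P.IsPrime := hP.1.1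
  have hIP : vanishingIdeal ℂ Y ≤ P := Ideal.le_comap_map.trans hP.1.2
  have hSP := Ideal.disjoint_of_mem_minimalPrimes_comap_map S hP
  have hindep : AlgebraicIndependent ℂ fun i : u ↦ Ideal.Quotient.mk P (X (i : Fin n)) := by
    have haeval : aeval (fun i : u ↦ Ideal.Quotient.mk P (X (i : Fin n))) =
        (Ideal.Quotient.mkₐ ℂ P).comp (rename Subtype.val) := algHom_ext fun i ↦ by simp
    rw [algebraicIndependent_iff_injective_aeval, haeval, injective_iff_map_eq_zero]
    intro g hg
    by_contra hg0
    have hgS : ρ g ∈ S := ⟨g, mem_nonZeroDivisors_of_ne_zero hg0, rfl⟩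
    exact Set.disjoint_left.mp hSP hgS (Ideal.Quotient.eq_zero_iff_mem.mp hg)
  refine le_antisymm (ringKrullDim_le_of_surjective _ (Ideal.Quotient.factor_surjective hIP)) ?_
  simpa [← hcard] using hindep.natCard_le_ringKrullDim

/-- Let `Y ⊆ ℂⁿ` be an affine algebraic variety with vanishing ideal `I(Y)`,
let `u` be a maximally independent subset of the variables for `I(Y)` (so `ℂ[u] → ℂ[x]/I(Y)`
is injective and `|u| = dim Y`), and let `0 ≠ h ∈ ℂ[u]` be such that
`(I(Y) : h^∞) = I(Y)·ℂ(u)[x∖u] ∩ ℂ[x]`.  Then the Zariski closure of `Y ∖ V(h)` is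
equidimensional of dimension `dim Y`: every minimal prime over `(I(Y) : h^∞)` defines a
variety of dimension exactly `dim Y`. -/
theorem saturation_equidimensional
    {n : ℕ} (Y : Set (Fin n → ℂ)) (hY : zeroLocus ℂ (vanishingIdeal ℂ Y) = Y)
    (u : Finset (Fin n)) (h : MvPolynomial {i // i ∈ u} ℂ) (hh : h ≠ 0) :
    let ρ : MvPolynomial {i // i ∈ u} ℂ →+* MvPolynomial (Fin n) ℂ :=
      (rename (fun i : {i // i ∈ u} => (i : Fin n)) :
        MvPolynomial {i // i ∈ u} ℂ →ₐ[ℂ] MvPolynomial (Fin n) ℂ).toRingHom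
    let S : Submonoid (MvPolynomial (Fin n) ℂ) :=
      Submonoid.map ρ.toMonoidHom (nonZeroDivisors (MvPolynomial {i // i ∈ u} ℂ))
    -- `u` is a maximally independent subset of variables for `I(Y)`
    (∀ g : MvPolynomial {i // i ∈ u} ℂ, ρ g ∈ vanishingIdeal ℂ Y → g = 0) →
    (u.card : WithBot ℕ∞) = ringKrullDim (MvPolynomial (Fin n) ℂ ⧸ vanishingIdeal ℂ Y) →
    -- the saturation coincides with the extension–contraction along `ℂ[x] → ℂ(u)[x∖u]`
    satIdeal (vanishingIdeal ℂ Y) (ρ h) =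
      Ideal.comap (algebraMap (MvPolynomial (Fin n) ℂ) (Localization S))
        (Ideal.map (algebraMap (MvPolynomial (Fin n) ℂ) (Localization S)) (vanishingIdeal ℂ Y)) →
    ∀ P ∈ (satIdeal (vanishingIdeal ℂ Y) (ρ h)).minimalPrimes,
      ringKrullDim (MvPolynomial (Fin n) ℂ ⧸ P) =
        ringKrullDim (MvPolynomial (Fin n) ℂ ⧸ vanishingIdeal ℂ Y) :=
  saturation_equidimensional_general Y u h
end

section
/- Let $I$ be an ideal of $K[x_1,\dots,x_n]$ over a field $K$ and let $u \subseteq \{x_1,\dots,x_n\}$ be such that the composite map $K[u] \to K[x]/I$ is injective. Then the cardinality of $u$ is at most the Krull dimension of $K[x]/I$. -/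
/-!
Pass to a prime `p` of `A = K[x]/I` with `p ∩ K[u] = 0` (it exists since `K[u]` is a domain
embedded in `A`). In the domain `A/p` the variables of `u` stay algebraically independent, so
`|u| ≤ trdeg_K (A/p) = s`, where by Noether normalization `A/p` is integral over a polynomial
ring `K[y₁, …, y_s]`. By going up, a chain of primes of length `s` in `K[y₁, …, y_s]` lifts to
`A/p`, and `dim (A/p) ≤ dim A`.
-/

open MvPolynomial

universe u

theorem ringKrullDim_le_of_isIntegral (R S : Type*) [CommRing R] [CommRing S] [Algebra R S]
    [Algebra.IsIntegral R S] [FaithfulSMul R S] : ringKrullDim R ≤ ringKrullDim S := by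
  refine iSup_le fun l => ?_
  obtain ⟨P, -, hP, hPl⟩ := Ideal.exists_ideal_over_prime_of_isIntegral (S := S) l.head.asIdeal ⊥
    (by simp [Ideal.comap_bot_of_injective _ (FaithfulSMul.algebraMap_injective R S)])
  have : P.LiesOver l.head.asIdeal := ⟨hPl.symm⟩
  obtain ⟨L, hlen, -, -⟩ := Ideal.exists_ltSeries_of_hasGoingUp l P
  exact hlen ▸ Order.LTSeries.length_le_krullDim L

theorem Ideal.exists_isPrime_injective_quotient_mk_comp {R S : Type*} [CommRing R] [CommRing S]
    [IsDomain R] (f : R →+* S) (hf : Function.Injective f) :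
    ∃ p : Ideal S, p.IsPrime ∧ Function.Injective ((Ideal.Quotient.mk p).comp f) := by
  obtain ⟨p, hp, hpf⟩ := Ideal.exists_comap_eq_of_mem_minimalPrimes_of_injective hf ⊥
    (by simp [IsDomain.minimalPrimes_eq_singleton_bot])
  refine ⟨p, hp, (injective_iff_map_eq_zero _).mpr fun a ha => ?_⟩
  rwa [RingHom.comp_apply, Ideal.Quotient.eq_zero_iff_mem, ← Ideal.mem_comap, hpf,
    Ideal.mem_bot] at ha

section NoetherNormalization

variable {K D : Type u} [Field K] [CommRing D] [Algebra K D]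

theorem trdeg_eq_of_injective_of_isIntegral [IsDomain D] {s : ℕ}
    (g : MvPolynomial (Fin s) K →ₐ[K] D) (hinj : Function.Injective g) (hint : g.IsIntegral) :
    Algebra.trdeg K D = s := by
  algebraize [g.toRingHom]
  have : FaithfulSMul (MvPolynomial (Fin s) K) D :=
    (faithfulSMul_iff_algebraMap_injective _ _).mpr hinj
  rw [← trdeg_add_eq K (MvPolynomial (Fin s) K) (A := D),
    trdeg_eq_zero (R := MvPolynomial (Fin s) K), MvPolynomial.trdeg_of_isDomain]
  simp

theorem card_le_ringKrullDim_of_algebraicIndependent [IsDomain D] [Algebra.FiniteType K D]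
    {ι : Type*} [Fintype ι] {x : ι → D} (hx : AlgebraicIndependent K x) :
    (Fintype.card ι : WithBot ℕ∞) ≤ ringKrullDim D := by
  obtain ⟨s, g, hinj, hint⟩ := exists_integral_inj_algHom_of_fg K D
  have hcard : Fintype.card ι ≤ s := by
    have := hx.lift_cardinalMk_le_trdeg
    rw [trdeg_eq_of_injective_of_isIntegral g hinj hint] at this
    simpa using this
  algebraize [g.toRingHom]
  have : FaithfulSMul (MvPolynomial (Fin s) K) D :=
    (faithfulSMul_iff_algebraMap_injective _ _).mpr hinj
  calc (Fintype.card ι : WithBot ℕ∞) ≤ s := by exact_mod_cast hcard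
    _ = ringKrullDim (MvPolynomial (Fin s) K) := by simp
    _ ≤ ringKrullDim D := ringKrullDim_le_of_isIntegral _ _

end NoetherNormalization

/-- If `I` is an ideal of `K[x₁,…,xₙ]` and `u` is a subset of the variables
such that the composite map `K[u] → K[x]/I` is injective (equivalently `I ∩ K[u] = 0`), then
the cardinality of `u` is at most the Krull dimension of `K[x]/I`. -/
theorem card_le_krullDim_of_inj
    {K : Type*} [Field K] {n : ℕ} (I : Ideal (MvPolynomial (Fin n) K))
    (u : Finset (Fin n))
    (hinj : Function.Injective
      ((Ideal.Quotient.mk I).comp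
        (rename (fun i : {i // i ∈ u} => (i : Fin n)) :
          MvPolynomial {i // i ∈ u} K →ₐ[K] MvPolynomial (Fin n) K).toRingHom)) :
    (u.card : WithBot ℕ∞) ≤ ringKrullDim (MvPolynomial (Fin n) K ⧸ I) := by
  obtain ⟨p, hp, hpinj⟩ := Ideal.exists_isPrime_injective_quotient_mk_comp _ hinj
  let ψ : MvPolynomial {i // i ∈ u} K →ₐ[K] (MvPolynomial (Fin n) K ⧸ I) ⧸ p :=
    (Ideal.Quotient.mkₐ K p).comp ((Ideal.Quotient.mkₐ K I).comp (rename Subtype.val))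
  have hx : AlgebraicIndependent K (ψ ∘ X) := (algebraicIndependent_X _ K).map' hpinj
  calc (u.card : WithBot ℕ∞) = Fintype.card {i // i ∈ u} := by simp
    _ ≤ ringKrullDim ((MvPolynomial (Fin n) K ⧸ I) ⧸ p) :=
      card_le_ringKrullDim_of_algebraicIndependent hx
    _ ≤ ringKrullDim (MvPolynomial (Fin n) K ⧸ I) := ringKrullDim_quotient_le p
end

section
/- Let $X \subseteq \mathbb{C}^n$ be an algebraic variety, $Y \subseteq \mathrm{Sing}(X)$ a subvariety, $u$ a maximally independent subset of variables for a defining ideal $I_Y$ of $Y$, $J := I(\mathrm{Con}(X)) + I_Y$ in $\mathbb{C}[x,y]$, and $h \in \mathbb{C}[u]$ a nonzero polynomial with $(J : h^\infty) = J\,\mathbb{C}(u)[(x\cup y)\setminus u] \cap \mathbb{C}[x,y]$. Then for every associated prime $P$ of $J$ such that $\dim(\kappa_X(V(P))) < \dim(Y)$, one has $h \in P$; consequently $\kappa_X(V(P)) \subseteq V(h)$. -/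
open MvPolynomial

/-- The Zariski tangent space at `p` of a subset `X ⊆ ℂⁿ`: the vectors annihilated by the
differentials at `p` of all polynomials vanishing on `X`. -/
noncomputable def tangentSpace {n : ℕ} (X : Set (Fin n → ℂ)) (p : Fin n → ℂ) :
    Submodule ℂ (Fin n → ℂ) where
  carrier := {v | ∀ f ∈ vanishingIdeal ℂ X, ∑ i, eval p (pderiv i f) * v i = 0}
  add_mem' := by
    intro a b ha hb f hf
    have h1 := ha f hf
    have h2 := hb f hf
    simp only [Pi.add_apply, mul_add, Finset.sum_add_distrib, h1, h2, add_zero]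
  zero_mem' := by intro f hf; simp
  smul_mem' := by
    intro c v hv f hf
    have h1 := hv f hf
    simp only [Pi.smul_apply, smul_eq_mul]
    calc (∑ i, eval p (pderiv i f) * (c * v i))
        = c * ∑ i, eval p (pderiv i f) * v i := by
          rw [Finset.mul_sum]
          exact Finset.sum_congr rfl fun i _ => by ring
      _ = 0 := by rw [h1, mul_zero]

/-- The dimension of (the Zariski closure of) a subset of `ℂⁿ`: the Krull dimension of its
coordinate ring. -/
noncomputable def dimS {n : ℕ} (S : Set (Fin n → ℂ)) : WithBot ℕ∞ :=
  ringKrullDim (MvPolynomial (Fin n) ℂ ⧸ vanishingIdeal ℂ S)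

/-- The set of regular points of `X`: points of `X` where the Zariski tangent space has
dimension equal to `dim X`. -/
noncomputable def regLocus {n : ℕ} (X : Set (Fin n → ℂ)) : Set (Fin n → ℂ) :=
  {p | p ∈ X ∧ (Module.finrank ℂ (tangentSpace X p) : WithBot ℕ∞) = dimS X}

/-- The singular locus of `X`. -/
noncomputable def singLocus {n : ℕ} (X : Set (Fin n → ℂ)) : Set (Fin n → ℂ) :=
  X \ regLocus X

/-- The conormal space of `X ⊆ ℂⁿ` (taking affine cones over the projective factor):
the Zariski closure in `ℂⁿ × ℂⁿ` of the set of pairs `(p, ζ)` with `p` a regular point of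
`X` and `ζ` vanishing on the tangent space `T_p X`. -/
noncomputable def conormal {n : ℕ} (X : Set (Fin n → ℂ)) : Set ((Fin n ⊕ Fin n) → ℂ) :=
  zeroLocus ℂ (vanishingIdeal ℂ
    {q | (fun i => q (Sum.inl i)) ∈ regLocus X ∧
      ∀ v ∈ tangentSpace X (fun i => q (Sum.inl i)), ∑ i, q (Sum.inr i) * v i = 0})

/-- The conormal map `κ_X`, i.e. the projection `ℂⁿ × ℂⁿ → ℂⁿ` onto the first factor. -/
def conormalProj {n : ℕ} (q : (Fin n ⊕ Fin n) → ℂ) : Fin n → ℂ := fun i => q (Sum.inl i)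

/-!
Since `dim κ_X(V(P)) < dim Y = |u|`, the coordinates `u` cannot stay algebraically independent on
`κ_X(V(P))`, so `P` contains a nonzero `s ∈ ℂ[u]`. Writing `P` as the radical of `(J : m)`, some
power of `s` times `m` lies in `J`, hence `m ∈ J ℂ(u)[x, y] ∩ ℂ[x, y] = (J : h^∞)` and a power of
`h` lies in `P`.

The dimension bound comes from a chain of primes. If `(a, x₁, …, x_d)` is algebraically
independent modulo a prime `p` of a finitely generated `k`-algebra `R`, some prime `q ⊋ p` keeps
`x₁, …, x_d` independent: otherwise every nonzero element of `R/p` divides a nonzero polynomial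
in the `xᵢ`, so `Frac(R/p)` is of finite type over `k(x₁, …, x_d)` and, by Zariski's lemma, `a`
would be algebraic over it.
-/

section Dimension

variable {k : Type*} [Field k]

theorem AlgebraicIndependent.not_finiteType_adjoin_of_option {L ι : Type*} [Field L]
    [Algebra k L] {a : L} {x : ι → L}
    (hx : AlgebraicIndependent k (fun o : Option ι ↦ o.elim a x)) :
    ¬ Algebra.FiniteType (IntermediateField.adjoin k (Set.range x)) L := by
  intro _
  have := finite_of_finite_type_of_isJacobsonRing (IntermediateField.adjoin k (Set.range x)) L
  have ha : IsAlgebraic (IntermediateField.adjoin k (Set.range x)) a :=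
    Algebra.IsAlgebraic.isAlgebraic a
  exact (AlgebraicIndependent.option_iff.mp hx).2 (IntermediateField.isAlgebraic_adjoin_iff.mp ha)

theorem IsFractionRing.finiteType_adjoin_of_forall_dvd {D L ι : Type*} [CommRing D] [IsDomain D]
    [Algebra k D] [Algebra.FiniteType k D] [Field L] [Algebra D L] [IsFractionRing D L]
    [Algebra k L] [IsScalarTower k D L] (w : ι → D)
    (hw : ∀ d ≠ 0, ∃ e ∈ Algebra.adjoin k (Set.range w), e ≠ 0 ∧ d ∣ e) :
    Algebra.FiniteType (IntermediateField.adjoin k (Set.range (algebraMap D L ∘ w))) L := by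
  classical
  set K := IntermediateField.adjoin k (Set.range (algebraMap D L ∘ w))
  obtain ⟨s, hs⟩ := Algebra.FiniteType.out (R := k) (A := D)
  let φ := IsScalarTower.toAlgHom k D L
  have hφ : ∀ t : Set D, Algebra.adjoin k (φ '' t) = (Algebra.adjoin k t).map φ :=
    Algebra.adjoin_image k φ
  refine ⟨⟨s.image φ, eq_top_iff.mpr fun l _ ↦ ?_⟩⟩
  set E := Algebra.adjoin K (↑(s.image φ) : Set L)
  have hD : ∀ d : D, φ d ∈ E := by
    intro d
    have hd : φ d ∈ Algebra.adjoin k (φ '' s) := by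
      rw [hφ, hs]
      exact ⟨d, trivial, rfl⟩
    refine Algebra.adjoin_le (S := E.restrictScalars k) ?_ hd
    rw [← Finset.coe_image]
    exact Algebra.subset_adjoin
  have hinv : ∀ e ∈ Algebra.adjoin k (Set.range w), (φ e)⁻¹ ∈ E := by
    intro e he
    have hK : φ e ∈ K := by
      refine IntermediateField.algebra_adjoin_le_adjoin k _ ?_
      rw [Set.range_comp, ← IsScalarTower.coe_toAlgHom' k, hφ]
      exact ⟨e, he, rfl⟩
    exact Subalgebra.algebraMap_mem E (⟨_, K.inv_mem hK⟩ : K)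
  obtain ⟨a, b, hb, rfl⟩ := IsFractionRing.div_surjective D l
  obtain ⟨e, he, he0, c, rfl⟩ := hw b (nonZeroDivisors.ne_zero hb)
  have hc : algebraMap D L c ≠ 0 := IsFractionRing.to_map_ne_zero_of_mem_nonZeroDivisors
    (mem_nonZeroDivisors_of_ne_zero (right_ne_zero_of_mul he0))
  have : algebraMap D L a / algebraMap D L b = φ (a * c) * (φ (b * c))⁻¹ := by
    simp only [φ, IsScalarTower.coe_toAlgHom', map_mul]
    field_simp
  rw [this]
  exact E.mul_mem (hD _) (hinv _ he)

theorem AlgebraicIndependent.exists_ne_zero_forall_dvd_aeval {D ι : Type*} [CommRing D]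
    [IsDomain D] [Algebra k D] [Algebra.FiniteType k D] {y : Option ι → D}
    (hy : AlgebraicIndependent k y) :
    ∃ d ≠ 0, ∀ f : MvPolynomial ι k, d ∣ aeval (y ∘ some) f → f = 0 := by
  by_contra! hdvd
  let L := FractionRing D
  have hz : AlgebraicIndependent k (fun o : Option ι ↦ o.elim (algebraMap D L (y none))
      (algebraMap D L ∘ y ∘ some)) := by
    convert hy.map' (f := IsScalarTower.toAlgHom k D L) (IsFractionRing.injective D L) using 1
    ext (_ | _) <;> rfl
  refine hz.not_finiteType_adjoin_of_option
    (IsFractionRing.finiteType_adjoin_of_forall_dvd (y ∘ some) fun d hd ↦ ?_)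
  obtain ⟨f, hdf, hf⟩ := hdvd d hd
  refine ⟨aeval (y ∘ some) f, aeval_range (R := k) (y ∘ some) ▸ ⟨f, rfl⟩,
    fun h0 ↦ hf ?_, hdf⟩
  exact algebraicIndependent_iff.mp (hy.comp some (Option.some_injective ι)) f h0

variable {R : Type*} [CommRing R] [Algebra k R]

theorem algebraicIndependent_quotient_mk_iff {ι : Type*} {x : ι → R} {q : Ideal R} :
    AlgebraicIndependent k (Ideal.Quotient.mk q ∘ x) ↔
      ∀ f : MvPolynomial ι k, aeval x f ∈ q → f = 0 := by
  rw [algebraicIndependent_iff]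
  refine forall_congr' fun f ↦ ?_
  rw [← Ideal.Quotient.eq_zero_iff_mem, ← Ideal.Quotient.mkₐ_eq_mk k, comp_aeval_apply]
  rfl

theorem exists_le_isPrime_algebraicIndependent_quotient_mk {ι : Type*} {x : ι → R} {I : Ideal R}
    (hI : ∀ f : MvPolynomial ι k, aeval x f ∈ I → f = 0) :
    ∃ q : Ideal R, q.IsPrime ∧ I ≤ q ∧
      AlgebraicIndependent k (Ideal.Quotient.mk q ∘ x) := by
  let T := (nonZeroDivisors (MvPolynomial ι k)).map (aeval x)
  have hT (q : Ideal R) :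
      Disjoint (q : Set R) T ↔ ∀ f : MvPolynomial ι k, aeval x f ∈ q → f = 0 := by
    simp only [Set.disjoint_left, SetLike.mem_coe, T, Submonoid.coe_map, Set.mem_image,
      mem_nonZeroDivisors_iff_ne_zero]
    grind
  obtain ⟨q, hq, hIq, hqT⟩ := Ideal.exists_le_prime_disjoint I T ((hT I).mpr hI)
  exact ⟨q, hq, hIq, algebraicIndependent_quotient_mk_iff.mpr ((hT q).mp hqT)⟩

variable [Algebra.FiniteType k R]

theorem exists_lt_isPrime_algebraicIndependent_quotient_mk {ι : Type*} {x : Option ι → R}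
    {p : Ideal R} [p.IsPrime] (hx : AlgebraicIndependent k (Ideal.Quotient.mk p ∘ x)) :
    ∃ q : Ideal R, q.IsPrime ∧ p < q ∧
      AlgebraicIndependent k (Ideal.Quotient.mk q ∘ x ∘ some) := by
  obtain ⟨d, hd0, hd⟩ := hx.exists_ne_zero_forall_dvd_aeval
  obtain ⟨r, rfl⟩ := Ideal.Quotient.mk_surjective d
  have hI (f : MvPolynomial ι k) (hf : aeval (x ∘ some) f ∈
      (Ideal.span {Ideal.Quotient.mk p r}).comap (Ideal.Quotient.mk p)) : f = 0 := by
    rw [Ideal.mem_comap, Ideal.mem_span_singleton, ← Ideal.Quotient.mkₐ_eq_mk k,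
      comp_aeval_apply] at hf
    exact hd f hf
  obtain ⟨q, hq, hIq, hqx⟩ := exists_le_isPrime_algebraicIndependent_quotient_mk hI
  have hrq : r ∈ q := hIq (Ideal.mem_comap.mpr (Ideal.mem_span_singleton_self _))
  have hrp : r ∉ p := fun h ↦ hd0 (Ideal.Quotient.eq_zero_iff_mem.mpr h)
  refine ⟨q, hq, lt_of_le_of_ne (fun a ha ↦ hIq ?_) (by rintro rfl; exact hrp hrq), hqx⟩
  simp [Ideal.Quotient.eq_zero_iff_mem.mpr ha]

theorem exists_ltSeries_head_eq_of_algebraicIndependent_quotient_mk (ι : Type*) [Fintype ι]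
    (x : ι → R) (p : PrimeSpectrum R)
    (hx : AlgebraicIndependent k (Ideal.Quotient.mk p.asIdeal ∘ x)) :
    ∃ s : LTSeries (PrimeSpectrum R), s.length = Fintype.card ι ∧ s.head = p := by
  revert x p
  refine Fintype.induction_empty_option (P := fun ι _ ↦ ∀ (x : ι → R) (p : PrimeSpectrum R),
    AlgebraicIndependent k (Ideal.Quotient.mk p.asIdeal ∘ x) →
      ∃ s : LTSeries (PrimeSpectrum R), s.length = Fintype.card ι ∧ s.head = p) ?_ ?_ ?_ ι
  · intro α β _ e ih x p hx
    have hxe := (algebraicIndependent_equiv e (f := Ideal.Quotient.mk p.asIdeal ∘ x)).mpr hx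
    obtain ⟨s, hs, rfl⟩ := ih (x ∘ e) p hxe
    exact ⟨s, hs.trans (Fintype.ofEquiv_card e.symm), rfl⟩
  · exact fun _ p _ ↦ ⟨RelSeries.singleton _ p, rfl, rfl⟩
  · intro α _ ih x p hx
    obtain ⟨q, hq, hpq, hqx⟩ := exists_lt_isPrime_algebraicIndependent_quotient_mk hx
    obtain ⟨s, hs, hsq⟩ := ih (x ∘ some) ⟨q, hq⟩ hqx
    have hps : p < s.head := by rw [hsq]; exact hpq
    exact ⟨s.cons p hps, by simp [hs], rfl⟩

theorem AlgebraicIndependent.card_le_ringKrullDim {ι : Type*} [Fintype ι] {x : ι → R}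
    (hx : AlgebraicIndependent k x) : (Fintype.card ι : WithBot ℕ∞) ≤ ringKrullDim R := by
  obtain ⟨p, hp, -, hpx⟩ := exists_le_isPrime_algebraicIndependent_quotient_mk (I := ⊥)
    fun f hf ↦ algebraicIndependent_iff.mp hx f ((Submodule.mem_bot k).mp hf)
  obtain ⟨s, hs, -⟩ :=
    exists_ltSeries_head_eq_of_algebraicIndependent_quotient_mk ι x ⟨p, hp⟩ hpx
  exact hs ▸ Order.LTSeries.length_le_krullDim s

end Dimension

section Saturation

variable {R : Type*} [CommRing R]

theorem mem_of_mem_associatedPrimes_of_satIdeal_eq {J P : Ideal R} {h s : R} {S : Submonoid R}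
    (hsat : satIdeal J h =
      (J.map (algebraMap R (Localization S))).comap (algebraMap R (Localization S)))
    (hP : P ∈ associatedPrimes R (R ⧸ J)) (hs : s ∈ S) (hsP : s ∈ P) : h ∈ P := by
  obtain ⟨m', hm⟩ := hP.eq_radical_colon
  obtain ⟨m, rfl⟩ := Ideal.Quotient.mk_surjective m'
  have hcolon (r : R) : r ∈ (⊥ : Submodule R (R ⧸ J)).colon {Ideal.Quotient.mk J m} ↔
      r * m ∈ J := by
    rw [Submodule.mem_colon_singleton, Submodule.mem_bot, Algebra.smul_def,
      Ideal.Quotient.algebraMap_eq, ← map_mul, Ideal.Quotient.eq_zero_iff_mem]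
  rw [hm] at hsP ⊢
  obtain ⟨a, ha⟩ := hsP
  have hmsat : m ∈ satIdeal J h := hsat ▸
    (IsLocalization.algebraMap_mem_map_algebraMap_iff S (Localization S) J m).mpr
      ⟨s ^ a, pow_mem hs a, (hcolon _).mp ha⟩
  obtain ⟨b, hb⟩ := hmsat
  exact ⟨b, (hcolon _).mpr hb⟩

end Saturation

section Conormal

variable {n : ℕ}

theorem dimS_zeroLocus_le (I : Ideal (MvPolynomial (Fin n) ℂ)) :
    dimS (zeroLocus ℂ I) ≤ ringKrullDim (MvPolynomial (Fin n) ℂ ⧸ I) :=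
  ringKrullDim_le_of_surjective _
    (Ideal.Quotient.factor_surjective (le_vanishingIdeal_zeroLocus I))

theorem card_le_dimS {Z : Set (Fin n → ℂ)} {u : Finset (Fin n)}
    (hZ : ∀ g : MvPolynomial u ℂ, rename Subtype.val g ∈ vanishingIdeal ℂ Z → g = 0) :
    (u.card : WithBot ℕ∞) ≤ dimS Z := by
  simp only [rename_eq_aeval] at hZ
  have hx : AlgebraicIndependent ℂ (Ideal.Quotient.mk (vanishingIdeal ℂ Z) ∘
      (X ∘ Subtype.val : u → MvPolynomial (Fin n) ℂ)) :=
    algebraicIndependent_quotient_mk_iff.mpr hZ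
  simpa [dimS] using hx.card_le_ringKrullDim

theorem rename_inl_mem_iff_mem_vanishingIdeal_image_conormalProj
    (P : Ideal (MvPolynomial (Fin n ⊕ Fin n) ℂ)) [P.IsPrime] (f : MvPolynomial (Fin n) ℂ) :
    rename Sum.inl f ∈ P ↔ f ∈ vanishingIdeal ℂ (conormalProj '' zeroLocus ℂ P) := by
  conv_lhs => rw [← IsPrime.vanishingIdeal_zeroLocus (K := ℂ) P]
  simp only [mem_vanishingIdeal_iff, Set.forall_mem_image, aeval_rename]
  rfl

end Conormal

theorem conormal_associated_primes_low_dimensional_image_general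
    {n : ℕ} (X Y : Set (Fin n → ℂ))
    (IY : Ideal (MvPolynomial (Fin n) ℂ)) (hIY : zeroLocus ℂ IY = Y)
    (u : Finset (Fin n)) (h : MvPolynomial {i // i ∈ u} ℂ) :
    -- the inclusion `ℂ[u] → ℂ[x]` and the inclusion `ℂ[u] → ℂ[x,y]`
    let ρ : MvPolynomial {i // i ∈ u} ℂ →+* MvPolynomial (Fin n) ℂ :=
      (rename (fun i : {i // i ∈ u} => (i : Fin n)) :
        MvPolynomial {i // i ∈ u} ℂ →ₐ[ℂ] MvPolynomial (Fin n) ℂ).toRingHom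
    let ρ2 : MvPolynomial {i // i ∈ u} ℂ →+* MvPolynomial (Fin n ⊕ Fin n) ℂ :=
      (rename (fun i : {i // i ∈ u} => (Sum.inl (i : Fin n) : Fin n ⊕ Fin n)) :
        MvPolynomial {i // i ∈ u} ℂ →ₐ[ℂ] MvPolynomial (Fin n ⊕ Fin n) ℂ).toRingHom
    -- `J = I(Con(X)) + I_Y`
    let J : Ideal (MvPolynomial (Fin n ⊕ Fin n) ℂ) :=
      vanishingIdeal ℂ (conormal X) +
        Ideal.map (rename (Sum.inl : Fin n → Fin n ⊕ Fin n) :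
          MvPolynomial (Fin n) ℂ →ₐ[ℂ] MvPolynomial (Fin n ⊕ Fin n) ℂ).toRingHom IY
    -- the multiplicative set `ℂ[u] ∖ {0}` inside `ℂ[x,y]`
    let S : Submonoid (MvPolynomial (Fin n ⊕ Fin n) ℂ) :=
      Submonoid.map ρ2.toMonoidHom (nonZeroDivisors (MvPolynomial {i // i ∈ u} ℂ))
    -- `u` is a maximally independent subset of variables for `I_Y`
    (∀ g : MvPolynomial {i // i ∈ u} ℂ, ρ g ∈ IY → g = 0) →
    (u.card : WithBot ℕ∞) = ringKrullDim (MvPolynomial (Fin n) ℂ ⧸ IY) →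
    -- `(J : h^∞) = J·ℂ(u)[(x∪y)∖u] ∩ ℂ[x,y]`
    satIdeal J (ρ2 h) =
      Ideal.comap (algebraMap (MvPolynomial (Fin n ⊕ Fin n) ℂ) (Localization S))
        (Ideal.map (algebraMap (MvPolynomial (Fin n ⊕ Fin n) ℂ) (Localization S)) J) →
    ∀ P ∈ associatedPrimes (MvPolynomial (Fin n ⊕ Fin n) ℂ)
        (MvPolynomial (Fin n ⊕ Fin n) ℂ ⧸ J),
      dimS (conormalProj '' zeroLocus ℂ P) < dimS Y →
        ρ2 h ∈ P ∧ conormalProj '' zeroLocus ℂ P ⊆ zeroLocus ℂ (Ideal.span {ρ h}) := by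
  intro ρ ρ2 J S _ hdim hsat P hP hlt
  have : P.IsPrime := hP.toIsPrime
  have hρ2 (g : MvPolynomial u ℂ) : ρ2 g = rename Sum.inl (ρ g) := (rename_rename _ _ g).symm
  obtain ⟨g, hg0, hgP⟩ : ∃ g, g ≠ 0 ∧ ρ2 g ∈ P := by
    by_contra! hP0
    refine hlt.not_ge ?_
    calc dimS Y ≤ ringKrullDim (MvPolynomial (Fin n) ℂ ⧸ IY) := hIY ▸ dimS_zeroLocus_le IY
      _ = u.card := hdim.symm
      _ ≤ dimS (conormalProj '' zeroLocus ℂ P) := card_le_dimS fun g hg ↦ by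
        by_contra hg0
        exact hP0 g hg0 ((hρ2 g).symm ▸
          (rename_inl_mem_iff_mem_vanishingIdeal_image_conormalProj P _).mpr hg)
  have hhP : ρ2 h ∈ P := mem_of_mem_associatedPrimes_of_satIdeal_eq hsat hP
    ⟨g, mem_nonZeroDivisors_of_ne_zero hg0, rfl⟩ hgP
  refine ⟨hhP, le_zeroLocus_iff_le_vanishingIdeal.mpr ?_⟩
  rw [Ideal.span_singleton_le_iff_mem,
    ← rename_inl_mem_iff_mem_vanishingIdeal_image_conormalProj, ← hρ2]
  exact hhP

/-- Let `X ⊆ ℂⁿ` be an algebraic variety, `Y ⊆ Sing(X)` a subvariety,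
`u` a maximally independent subset of variables for a defining ideal `I_Y` of `Y`,
`J := I(Con(X)) + I_Y ⊆ ℂ[x,y]`, and `0 ≠ h ∈ ℂ[u]` with
`(J : h^∞) = J·ℂ(u)[(x∪y)∖u] ∩ ℂ[x,y]`.  Then for every associated prime `P` of `J` with
`dim κ_X(V(P)) < dim Y` one has `h ∈ P`, and consequently `κ_X(V(P)) ⊆ V(h)`. -/
theorem conormal_associated_primes_low_dimensional_image
    {n : ℕ} (X Y : Set (Fin n → ℂ))
    (hX : zeroLocus ℂ (vanishingIdeal ℂ X) = X) (hYX : Y ⊆ singLocus X)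
    (IY : Ideal (MvPolynomial (Fin n) ℂ)) (hIY : zeroLocus ℂ IY = Y)
    (u : Finset (Fin n)) (h : MvPolynomial {i // i ∈ u} ℂ) (hh : h ≠ 0) :
    -- the inclusion `ℂ[u] → ℂ[x]` and the inclusion `ℂ[u] → ℂ[x,y]`
    let ρ : MvPolynomial {i // i ∈ u} ℂ →+* MvPolynomial (Fin n) ℂ :=
      (rename (fun i : {i // i ∈ u} => (i : Fin n)) :
        MvPolynomial {i // i ∈ u} ℂ →ₐ[ℂ] MvPolynomial (Fin n) ℂ).toRingHom
    let ρ2 : MvPolynomial {i // i ∈ u} ℂ →+* MvPolynomial (Fin n ⊕ Fin n) ℂ :=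
      (rename (fun i : {i // i ∈ u} => (Sum.inl (i : Fin n) : Fin n ⊕ Fin n)) :
        MvPolynomial {i // i ∈ u} ℂ →ₐ[ℂ] MvPolynomial (Fin n ⊕ Fin n) ℂ).toRingHom
    -- `J = I(Con(X)) + I_Y`
    let J : Ideal (MvPolynomial (Fin n ⊕ Fin n) ℂ) :=
      vanishingIdeal ℂ (conormal X) +
        Ideal.map (rename (Sum.inl : Fin n → Fin n ⊕ Fin n) :
          MvPolynomial (Fin n) ℂ →ₐ[ℂ] MvPolynomial (Fin n ⊕ Fin n) ℂ).toRingHom IY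
    -- the multiplicative set `ℂ[u] ∖ {0}` inside `ℂ[x,y]`
    let S : Submonoid (MvPolynomial (Fin n ⊕ Fin n) ℂ) :=
      Submonoid.map ρ2.toMonoidHom (nonZeroDivisors (MvPolynomial {i // i ∈ u} ℂ))
    -- `u` is a maximally independent subset of variables for `I_Y`
    (∀ g : MvPolynomial {i // i ∈ u} ℂ, ρ g ∈ IY → g = 0) →
    (u.card : WithBot ℕ∞) = ringKrullDim (MvPolynomial (Fin n) ℂ ⧸ IY) →
    -- `(J : h^∞) = J·ℂ(u)[(x∪y)∖u] ∩ ℂ[x,y]`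
    satIdeal J (ρ2 h) =
      Ideal.comap (algebraMap (MvPolynomial (Fin n ⊕ Fin n) ℂ) (Localization S))
        (Ideal.map (algebraMap (MvPolynomial (Fin n ⊕ Fin n) ℂ) (Localization S)) J) →
    ∀ P ∈ associatedPrimes (MvPolynomial (Fin n ⊕ Fin n) ℂ)
        (MvPolynomial (Fin n ⊕ Fin n) ℂ ⧸ J),
      dimS (conormalProj '' zeroLocus ℂ P) < dimS Y →
        ρ2 h ∈ P ∧ conormalProj '' zeroLocus ℂ P ⊆ zeroLocus ℂ (Ideal.span {ρ h}) :=
  conormal_associated_primes_low_dimensional_image_general X Y IY hIY u h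
end
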